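/- arXiv:0906.5010 — 5 statements merged into one kernel-verified Lean document; each statement's English description precedes it below -/
import Mathlib

section
/- Assume s is special for S with parameter α, and let ⟨u,v⟩ be a dominant directed edge of G_S. Then the dominant path to v contains the edge (u,v). -/
open MeasureTheory SimpleGraph

namespace CF

variable {V : Type} [Fintype V] [DecidableEq V]

/-- The subgraph of `G` induced on the vertex set `S` (kept as a graph on `V`). -/
def inducedSub (G : SimpleGraph V) (S : Set V) : SimpleGraph V where
  Adj u v := u ∈ S ∧ v ∈ S ∧ G.Adj u v
  symm := ⟨fun u v h => ⟨h.2.1, h.1, h.2.2.symm⟩⟩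
  loopless := ⟨fun v h => G.loopless.irrefl v h.2.2⟩

/-- The space of walks in `G` starting at `s` of length at most `ℓ`
(a lazy walk of length `ℓ` induces such a walk after deleting self-loops). -/
def WalkSpace (G : SimpleGraph V) (s : V) (ℓ : ℕ) : Type :=
  Σ t : V, {w : G.Walk s t // w.length ≤ ℓ}

instance (G : SimpleGraph V) (s : V) (ℓ : ℕ) : MeasurableSpace (WalkSpace G s ℓ) := ⊤

variable {G : SimpleGraph V} {s : V} {ℓ : ℕ}

/-- The walk `W` reaches the vertex `v`. -/
def Reaches (W : WalkSpace G s ℓ) (v : V) : Prop := v ∈ W.2.1.support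

/-- The simple path from `s` to `v` induced by a walk `W` reaching `v`:
truncate `W` at its first visit to `v` and delete retraced segments. -/
def inducedPath (W : WalkSpace G s ℓ) (v : V) (h : Reaches W v) : G.Walk s v :=
  (W.2.1.takeUntil v h).bypass

/-- `s` is special for `S` with parameter `α`: every vertex of `S` is reached
by a `μ`-random walk with probability at least `α`. -/
def Special (μ : Measure (WalkSpace G s ℓ)) (S : Finset V) (α : ℝ) : Prop :=
  ∀ v ∈ S, α ≤ (μ {W | Reaches W v}).toReal

/-- `P` is a dominant path to `v`: `P` is a simple path from `s` to `v`, more than half of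
the probability mass of walks reaching `v` induce `P` at `v`, and the probability of
reaching `v` inducing a path different from `P` is less than `α/2`. -/
def IsDominantPath (μ : Measure (WalkSpace G s ℓ)) (α : ℝ) (v : V) (P : G.Walk s v) : Prop :=
  P.IsPath ∧
    (μ {W | Reaches W v}).toReal / 2 <
      (μ {W | ∃ h : Reaches W v, inducedPath W v h = P}).toReal ∧
    (μ {W | ∃ h : Reaches W v, inducedPath W v h ≠ P}).toReal < α / 2

/-- `v` is isolated: it has a dominant path. -/
def Isolated (μ : Measure (WalkSpace G s ℓ)) (α : ℝ) (v : V) : Prop :=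
  ∃ P : G.Walk s v, IsDominantPath μ α v P

/-- The directed edge `⟨u,v⟩` of `G_S` is dominant. -/
def Dominant (μ : Measure (WalkSpace G s ℓ)) (S : Finset V) (α : ℝ) (u v : V) : Prop :=
  u ∈ S ∧ v ∈ S ∧ G.Adj u v ∧ Isolated μ α v ∧
    (μ {W | ∃ h : Reaches W v, s(u, v) ∉ (inducedPath W v h).edges}).toReal < α / 2

/-- The undirected edge `(u,v)` of `G_S` is recessive. -/
def Recessive (μ : Measure (WalkSpace G s ℓ)) (S : Finset V) (α : ℝ) (u v : V) : Prop :=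
  u ∈ S ∧ v ∈ S ∧ G.Adj u v ∧ ¬ Dominant μ S α u v ∧ ¬ Dominant μ S α v u

/-- Two walks form a cycle if the subgraph of `G` induced on the union of their
vertex sets contains a cycle. -/
def FormsCycle (W W' : WalkSpace G s ℓ) : Prop :=
  ¬ (inducedSub G ({v | Reaches W v} ∪ {v | Reaches W' v})).IsAcyclic

/-- `cyc_W`: the probability that an independent `μ`-random walk forms a cycle with `W`. -/
noncomputable def cycProb (μ : Measure (WalkSpace G s ℓ)) (W : WalkSpace G s ℓ) : ℝ :=
  (μ {W' | FormsCycle W W'}).toReal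

/-- `W` is heavy if `cyc_W > 1/√n`. -/
def Heavy (μ : Measure (WalkSpace G s ℓ)) (W : WalkSpace G s ℓ) : Prop :=
  1 / Real.sqrt (Fintype.card V) < cycProb μ W

/-- `W` is light if it is not heavy. -/
def Light (μ : Measure (WalkSpace G s ℓ)) (W : WalkSpace G s ℓ) : Prop := ¬ Heavy μ W

/-- `q^H_v`: the probability that a `μ`-random walk is heavy and reaches `v`. -/
noncomputable def qH (μ : Measure (WalkSpace G s ℓ)) (v : V) : ℝ :=
  (μ {W | Heavy μ W ∧ Reaches W v}).toReal

/-- `v` is blue if `q^H_v > α/4`. -/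
def Blue (μ : Measure (WalkSpace G s ℓ)) (α : ℝ) (v : V) : Prop := α / 4 < qH μ v

/-- The event `E_w` on a pair of independent walks: both walks are light and either
(i) both reach `w` and induce distinct paths at `w`, or (ii) one reaches `w`, the other
reaches a `G_S`-neighbor `u` of `w`, and the edge sets of the two induced paths together
with the edge `(u,w)` contain a cycle. -/
def EventE (μ : Measure (WalkSpace G s ℓ)) (S : Finset V) (w : V)
    (p : WalkSpace G s ℓ × WalkSpace G s ℓ) : Prop :=
  Light μ p.1 ∧ Light μ p.2 ∧
    ((∃ (h1 : Reaches p.1 w) (h2 : Reaches p.2 w),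
        inducedPath p.1 w h1 ≠ inducedPath p.2 w h2) ∨
      (∃ u, u ∈ S ∧ w ∈ S ∧ G.Adj u w ∧
        ((∃ (h1 : Reaches p.1 w) (h2 : Reaches p.2 u),
            ¬ (SimpleGraph.fromEdgeSet
                ({e | e ∈ (inducedPath p.1 w h1).edges} ∪
                  {e | e ∈ (inducedPath p.2 u h2).edges} ∪ {s(u, w)})).IsAcyclic) ∨
          (∃ (h1 : Reaches p.2 w) (h2 : Reaches p.1 u),
            ¬ (SimpleGraph.fromEdgeSet
                ({e | e ∈ (inducedPath p.2 w h1).edges} ∪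
                  {e | e ∈ (inducedPath p.1 u h2).edges} ∪ {s(u, w)})).IsAcyclic))))

end CF

namespace CF

variable {V : Type} [DecidableEq V] {G : SimpleGraph V} {s : V} {ℓ : ℕ}
  {μ : Measure (WalkSpace G s ℓ)} {α : ℝ} {v : V} {P : G.Walk s v}

/-- Were `e` off `P`, every walk inducing `P` would avoid `e`, but those walks carry more than
`q_v / 2 ≥ α / 2`. -/
theorem IsDominantPath.mem_edges [IsFiniteMeasure μ] (hP : IsDominantPath μ α v P)
    (hreach : α ≤ (μ {W | Reaches W v}).toReal) {e : Sym2 V}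
    (hrare : (μ {W | ∃ h : Reaches W v, e ∉ (inducedPath W v h).edges}).toReal < α / 2) :
    e ∈ P.edges := by
  by_contra he
  have hsub : {W : WalkSpace G s ℓ | ∃ h : Reaches W v, inducedPath W v h = P} ⊆
      {W | ∃ h : Reaches W v, e ∉ (inducedPath W v h).edges} :=
    fun W ⟨h, hWP⟩ => ⟨h, hWP ▸ he⟩
  have := ENNReal.toReal_mono (measure_ne_top μ _) (measure_mono hsub)
  linarith [hP.2.1]

end CF

theorem stmt0_general {V : Type} [DecidableEq V]
    (G : SimpleGraph V)
    (S : Finset V) (s : V) (ℓ : ℕ)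
    (μ : MeasureTheory.Measure (CF.WalkSpace G s ℓ)) [MeasureTheory.IsProbabilityMeasure μ]
    (α : ℝ) (hspec : CF.Special μ S α)
    (u v : V) (hdom : CF.Dominant μ S α u v)
    (P : G.Walk s v) (hP : CF.IsDominantPath μ α v P) :
    s(u, v) ∈ P.edges :=
  hP.mem_edges (hspec v hdom.2.1) hdom.2.2.2.2

/-- If `⟨u,v⟩` is a dominant directed edge of `G_S`, then the dominant path
to `v` contains the edge `(u,v)`. -/
theorem stmt0 {V : Type} [Fintype V] [DecidableEq V]
    (G : SimpleGraph V) [DecidableRel G.Adj] (d : ℕ) (hd : 1 ≤ d)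
    (hdeg : ∀ v, G.degree v ≤ d)
    (S : Finset V) (s : V) (hs : s ∈ S) (ℓ : ℕ)
    (μ : MeasureTheory.Measure (CF.WalkSpace G s ℓ)) [MeasureTheory.IsProbabilityMeasure μ]
    (α : ℝ) (hα : 0 < α) (hspec : CF.Special μ S α)
    (u v : V) (hdom : CF.Dominant μ S α u v)
    (P : G.Walk s v) (hP : CF.IsDominantPath μ α v P) :
    s(u, v) ∈ P.edges :=
  stmt0_general G S s ℓ μ α hspec u v hdom P hP
end

section
/- Assume s is special for S with parameter α. Then the set of dominant edges forms a directed forest; in particular, the set of undirected edges (u,v) of G_S such that ⟨u,v⟩ or ⟨v,u⟩ is dominant contains no cycle of G. -/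
open MeasureTheory SimpleGraph

/-! If `⟨u, v⟩` is dominant, more than `α/2` of the walks induce the dominant path `P_v` at `v`,
while fewer than `α/2` reach `v` avoiding the edge `(u, v)`, and fewer than `α/2` reach `u` by a
path other than `P_u`. So some walk induces `P_v` at `v` and does neither of the other two: its
loop-erased path at `v` is `P_v`, runs through `u`, and truncated at `u` it is `P_u`. Hence `P_u`
is a proper prefix of `P_v`.

The last edge of `P_v` is the only dominant edge into `v`. A cycle has as many edges as vertices,
so if all its edges are dominant, every vertex of the cycle is the head of one of them; walking
backwards along these edges would make the dominant path lengths decrease forever. -/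

namespace SimpleGraph.Walk

variable {V : Type*} [DecidableEq V] {G : SimpleGraph V} {a b c u v w x : V}

lemma dropUntil_append_of_mem_left (p : G.Walk a b) (q : G.Walk b c) (hx : x ∈ p.support) :
    (p.append q).dropUntil x (support_subset_support_append_left _ _ hx) =
      (p.dropUntil x hx).append q := by
  induction p with
  | nil => rw [mem_support_nil_iff] at hx; subst_vars; simp
  | @cons y _ _ _ p ih =>
    by_cases hyx : y = x
    · subst hyx; simp
    · simp only [cons_append, dropUntil, dif_neg hyx]
      exact ih q _

lemma dropUntil_append_of_notMem_left (p : G.Walk a b) (q : G.Walk b c) (hx : x ∉ p.support)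
    (hq : x ∈ q.support) :
    (p.append q).dropUntil x (support_subset_support_append_right _ _ hq) = q.dropUntil x hq := by
  induction p with
  | nil => rfl
  | cons => grind [cons_append, dropUntil, support_cons]

lemma IsPath.start_notMem_support_dropUntil {p : G.Walk u v} (hp : p.IsPath)
    (hx : x ∈ p.support) (hxu : x ≠ u) : u ∉ (p.dropUntil x hx).support := by
  intro hu
  have hnodup := hp.support_nodup
  rw [← p.take_spec hx, support_append] at hnodup
  rw [← (p.dropUntil x hx).cons_tail_support, List.mem_cons] at hu
  exact List.disjoint_of_nodup_append hnodup (start_mem_support _) (hu.resolve_left hxu.symm)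

lemma bypass_append_of_count_eq_one (p : G.Walk a u) (q : G.Walk u v)
    (hp : p.support.count u = 1) (hu : u ∈ (p.append q).bypass.support) :
    (p.append q).bypass = p.bypass.append q.bypass := by
  induction p with
  | nil => rfl
  | @cons x _ u _ p ih =>
    have hxu : x ≠ u := by
      rintro rfl
      simp only [support_cons, List.count_cons_self, add_eq_right, List.count_eq_zero] at hp
      exact hp p.end_mem_support
    have hp' : p.support.count u = 1 := by simpa [List.count_cons, hxu] using hp
    rw [cons_append] at hu ⊢
    simp only [bypass] at hu ⊢
    have hu' : u ∈ (p.append q).bypass.support := by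
      split_ifs at hu with hs
      · exact support_dropUntil_subset_support _ hs hu
      · exact (List.mem_cons.mp hu).resolve_left hxu.symm
    have ih := ih q hp' hu'
    by_cases hs : x ∈ (p.append q).bypass.support
    · rw [dif_pos hs] at hu ⊢
      simp only [ih] at hs hu ⊢
      by_cases hps : x ∈ p.bypass.support
      · rw [dif_pos hps, dropUntil_append_of_mem_left _ _ hps]
      · have hqs := ((mem_support_append_iff _ _).mp hs).resolve_left hps
        rw [dropUntil_append_of_notMem_left _ _ hps hqs] at hu
        exact absurd hu ((bypass_isPath q).start_notMem_support_dropUntil hqs hxu)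
    · have hps : x ∉ p.bypass.support := fun h =>
        hs (ih ▸ (mem_support_append_iff _ _).mpr (.inl h))
      rw [dif_neg hs, dif_neg hps, ih, cons_append]

lemma length_bypass_takeUntil_lt (p : G.Walk a b) (hu : u ∈ p.bypass.support) (hub : u ≠ b) :
    (p.takeUntil u (support_bypass_subset_support p hu)).bypass.length < p.bypass.length := by
  have h := support_bypass_subset_support p hu
  have hsplit := p.take_spec h
  have key := bypass_append_of_count_eq_one (p.takeUntil u h) (p.dropUntil u h)
    (p.count_support_takeUntil_eq_one h) (by rwa [hsplit])
  rw [hsplit] at key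
  have hpos : (p.dropUntil u h).bypass.length ≠ 0 := fun h0 => hub (eq_of_length_eq_zero h0)
  rw [key, length_append]
  omega

lemma IsCycle.exists_rel_of_forall_edges {c : G.Walk x x} (hc : c.IsCycle) {r : V → V → Prop}
    (hr : ∀ ⦃u u' v⦄, r u v → r u' v → u = u')
    (horient : ∀ e ∈ c.edges, ∃ u v, e = s(u, v) ∧ r u v) {v : V} (hv : v ∈ c.support) :
    ∃ u ∈ c.support, r u v := by
  choose tl hd heq hrel using horient
  have hcard : c.support.tail.toFinset.card ≤ c.edges.toFinset.card := by
    rw [List.toFinset_card_of_nodup hc.support_nodup,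
      List.toFinset_card_of_nodup hc.edges_nodup, List.length_tail, length_support, length_edges]
    omega
  have htail : ∀ w ∈ c.support, w ∈ c.support.tail := fun w hw =>
    ((mem_support_iff c).mp hw).elim (· ▸ end_mem_tail_support hc.not_nil) id
  obtain ⟨e, he, hve⟩ := Finset.surj_on_of_inj_on_of_card_le
    (fun e he => hd e (List.mem_toFinset.mp he))
    (fun e he => List.mem_toFinset.mpr (htail _ (snd_mem_support_of_mem_edges c
      (heq e (List.mem_toFinset.mp he) ▸ List.mem_toFinset.mp he))))
    (fun e₁ e₂ he₁ he₂ h => by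
      rw [heq e₁ (List.mem_toFinset.mp he₁), heq e₂ (List.mem_toFinset.mp he₂), h,
        hr (hrel e₁ _) (h ▸ hrel e₂ _)])
    hcard v (List.mem_toFinset.mpr (htail v hv))
  have he' := List.mem_toFinset.mp he
  exact ⟨tl e he', fst_mem_support_of_mem_edges c (heq e he' ▸ he'), hve ▸ hrel e he'⟩

end SimpleGraph.Walk

lemma MeasureTheory.nonempty_diff_of_measureReal_lt {Ω : Type*} [MeasurableSpace Ω]
    {μ : Measure Ω} [IsFiniteMeasure μ] {A B : Set Ω} (h : μ.real B < μ.real A) :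
    (A \ B).Nonempty := by
  by_contra hAB
  rw [Set.not_nonempty_iff_eq_empty, Set.sdiff_eq_empty] at hAB
  exact (measureReal_mono hAB).not_gt h

namespace CF

variable {V : Type} [DecidableEq V] {G : SimpleGraph V} {s : V} {ℓ : ℕ}
  {μ : Measure (WalkSpace G s ℓ)} [IsFiniteMeasure μ] {S : Finset V} {α : ℝ}

lemma IsDominantPath.half_lt_measureReal (hspec : Special μ S α) {v : V} (hv : v ∈ S)
    {P : G.Walk s v} (hP : IsDominantPath μ α v P) :
    α / 2 < μ.real {W | ∃ h : Reaches W v, inducedPath W v h = P} := by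
  have hsub : {W : WalkSpace G s ℓ | Reaches W v} ⊆
      {W | ∃ h : Reaches W v, inducedPath W v h = P} ∪
        {W | ∃ h : Reaches W v, inducedPath W v h ≠ P} :=
    fun W hW => (em (inducedPath W v hW = P)).imp (⟨hW, ·⟩) (⟨hW, ·⟩)
  have hreach : α ≤ μ.real {W | Reaches W v} := hspec v hv
  have hother : μ.real {W | ∃ h : Reaches W v, inducedPath W v h ≠ P} < α / 2 := hP.2.2
  linarith [(measureReal_mono hsub).trans (measureReal_union_le (μ := μ) _ _)]

lemma Dominant.mem_edges (hspec : Special μ S α) {u v : V} (hD : Dominant μ S α u v)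
    {P : G.Walk s v} (hP : IsDominantPath μ α v P) : s(u, v) ∈ P.edges := by
  obtain ⟨-, hv, -, -, hmiss⟩ := hD
  obtain ⟨W, ⟨h, rfl⟩, hW⟩ :=
    nonempty_diff_of_measureReal_lt (hmiss.trans (hP.half_lt_measureReal hspec hv))
  exact not_not.mp fun hnot => hW ⟨h, hnot⟩

lemma Dominant.left_unique (hspec : Special μ S α) {u u' v : V} (hD : Dominant μ S α u v)
    (hD' : Dominant μ S α u' v) : u = u' := by
  obtain ⟨P, hP⟩ := hD.2.2.2.1
  have h := hD.mem_edges hspec hP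
  have h' := hD'.mem_edges hspec hP
  rw [Sym2.eq_swap] at h h'
  exact (hP.1.eq_penultimate_of_mem_edges h).trans (hP.1.eq_penultimate_of_mem_edges h').symm

lemma Dominant.exists_inducedPath_eq (hspec : Special μ S α) {u v : V} (hD : Dominant μ S α u v)
    {Pv : G.Walk s v} (hPv : IsDominantPath μ α v Pv)
    {Pu : G.Walk s u} (hPu : IsDominantPath μ α u Pu) :
    ∃ (W : WalkSpace G s ℓ) (hv : Reaches W v) (hu : Reaches W u),
      inducedPath W v hv = Pv ∧ inducedPath W u hu = Pu := by
  obtain ⟨W, ⟨hv, hWv⟩, hW⟩ := nonempty_diff_of_measureReal_lt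
    (B := {W : WalkSpace G s ℓ | ∃ h : Reaches W u, inducedPath W u h ≠ Pu})
    (hPu.2.2.trans (hPv.half_lt_measureReal hspec hD.2.1))
  have huPv : u ∈ (inducedPath W v hv).support :=
    hWv ▸ Walk.fst_mem_support_of_mem_edges Pv (hD.mem_edges hspec hPv)
  have hu : Reaches W u := W.2.1.support_takeUntil_subset_support hv
    ((W.2.1.takeUntil v hv).support_bypass_subset_support huPv)
  exact ⟨W, hv, hu, hWv, not_not.mp fun hne => hW ⟨hu, hne⟩⟩

lemma Dominant.length_lt (hspec : Special μ S α) {u v : V} (hD : Dominant μ S α u v)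
    {Pv : G.Walk s v} (hPv : IsDominantPath μ α v Pv)
    {Pu : G.Walk s u} (hPu : IsDominantPath μ α u Pu) : Pu.length < Pv.length := by
  obtain ⟨W, hv, hu, rfl, rfl⟩ := hD.exists_inducedPath_eq hspec hPv hPu
  have huPv : u ∈ (inducedPath W v hv).support :=
    Walk.fst_mem_support_of_mem_edges _ (hD.mem_edges hspec hPv)
  have hlt := (W.2.1.takeUntil v hv).length_bypass_takeUntil_lt huPv hD.2.2.1.ne
  rwa [Walk.takeUntil_takeUntil W.2.1 hv] at hlt

lemma eq_empty_of_forall_exists_dominant (hspec : Special μ S α) {T : Set V}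
    (hT : ∀ v ∈ T, ∃ u ∈ T, Dominant μ S α u v) : T = ∅ := by
  suffices h : ∀ n, ∀ v ∈ T, ∀ P : G.Walk s v, IsDominantPath μ α v P → P.length ≠ n by
    refine Set.eq_empty_of_forall_notMem fun v hv => ?_
    obtain ⟨_, -, -, -, -, ⟨P, hP⟩, -⟩ := hT v hv
    exact h _ v hv P hP rfl
  intro n
  induction n using Nat.strong_induction_on with
  | _ n ih =>
    rintro v hv Pv hPv rfl
    obtain ⟨u, hu, hD⟩ := hT v hv
    obtain ⟨-, -, -, -, -, ⟨Pu, hPu⟩, -⟩ := hT u hu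
    exact ih _ (hD.length_lt hspec hPv hPu) u hu Pu hPu rfl

end CF

theorem stmt3_general {V : Type} [DecidableEq V]
    (G : SimpleGraph V) (S : Finset V) (s : V) (ℓ : ℕ)
    (μ : MeasureTheory.Measure (CF.WalkSpace G s ℓ)) [MeasureTheory.IsProbabilityMeasure μ]
    (α : ℝ) (hspec : CF.Special μ S α) :
    ¬ ∃ (x : V) (c : G.Walk x x), c.IsCycle ∧
        ∀ e ∈ c.edges, ∃ u v, e = s(u, v) ∧
          (CF.Dominant μ S α u v ∨ CF.Dominant μ S α v u) := by
  rintro ⟨x, c, hc, hdom⟩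
  have horient : ∀ e ∈ c.edges, ∃ u v, e = s(u, v) ∧ CF.Dominant μ S α u v := by
    intro e he
    obtain ⟨u, v, rfl, huv | hvu⟩ := hdom e he
    exacts [⟨u, v, rfl, huv⟩, ⟨v, u, Sym2.eq_swap, hvu⟩]
  have hempty : {v | v ∈ c.support} = ∅ := CF.eq_empty_of_forall_exists_dominant hspec
    fun _ hv => hc.exists_rel_of_forall_edges (r := CF.Dominant μ S α)
      (fun _ _ _ => CF.Dominant.left_unique hspec) horient hv
  exact hempty.subset c.start_mem_support

/-- The set of dominant edges forms a (directed) forest: there is no cycle of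
`G` all of whose edges have a dominant orientation. -/
theorem stmt3 {V : Type} [Fintype V] [DecidableEq V]
    (G : SimpleGraph V) [DecidableRel G.Adj] (d : ℕ) (hd : 1 ≤ d)
    (hdeg : ∀ v, G.degree v ≤ d)
    (S : Finset V) (s : V) (hs : s ∈ S) (ℓ : ℕ)
    (μ : MeasureTheory.Measure (CF.WalkSpace G s ℓ)) [MeasureTheory.IsProbabilityMeasure μ]
    (α : ℝ) (hα : 0 < α) (hspec : CF.Special μ S α) :
    ¬ ∃ (x : V) (c : G.Walk x x), c.IsCycle ∧
        ∀ e ∈ c.edges, ∃ u v, e = s(u, v) ∧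
          (CF.Dominant μ S α u v ∨ CF.Dominant μ S α v u) :=
  stmt3_general G S s ℓ μ α hspec
end

section
/- Assume s is special for S with parameter α, where α ≥ ε/(√(|S|·n)·log n), and that more than ε·|S|/2 vertices of S are blue. Let W_1,…,W_m be independent μ-random walks, where m = c·ε⁻³·√n·ℓ·log²n for a sufficiently large absolute constant c. Then with probability at least 2/3, the subgraph of G induced on the union of the vertex sets of W_1,…,W_m contains a cycle. -/
open MeasureTheory SimpleGraph

/-!
Every walk reaches at most `ℓ + 1` vertices, so summing `q^H_v` over the more than `ε|S|/2`
blue vertices shows that a `μ`-random walk is heavy with probability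
`h ≥ ε² / (8 (ℓ + 1) √n log n)`. Split the `m` walks into two halves. The first half contains
a heavy walk `W` except with probability `(1 - h)^(m/2)`; a heavy `W` forms a cycle with each
independent walk of the second half with probability more than `1/√n`, so all of them miss it
with probability at most `(1 - 1/√n)^(m/2)`. For `m = 144 ε⁻³ √n ℓ log² n` both failure
probabilities are at most `1/6`.
-/

namespace CF

open Finset

section Measure

variable {α ι : Type*} [MeasurableSpace α] (μ : Measure α)

lemma sum_measureReal_le_mul_of_multiplicity_le [IsFiniteMeasure μ] (S : Finset ι) (A : ι → Set α)
    {P : Set α} (hA : ∀ i, MeasurableSet (A i)) (hP : MeasurableSet P)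
    (hAP : ∀ i ∈ S, A i ⊆ P) {K : ℕ}
    (hK : ∀ x, ∃ T : Finset ι, #T ≤ K ∧ ∀ i ∈ S, x ∈ A i → i ∈ T) :
    ∑ i ∈ S, μ.real (A i) ≤ K * μ.real P := by
  have hpoint : ∀ x, ∑ i ∈ S, (A i).indicator 1 x ≤ (K : ENNReal) * P.indicator 1 x := by
    intro x
    by_cases hx : x ∈ P
    · obtain ⟨T, hTK, hT⟩ := hK x
      calc ∑ i ∈ S, (A i).indicator 1 x ≤ ∑ i ∈ T, (A i).indicator (1 : α → ENNReal) x :=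
            sum_le_sum_of_ne_zero fun i hi hne => hT i hi (Set.mem_of_indicator_ne_zero hne)
        _ ≤ ∑ _i ∈ T, 1 := sum_le_sum fun i _ => Set.indicator_le_self' (fun _ _ => zero_le) x
        _ ≤ K * P.indicator 1 x := by simpa [hx] using hTK
    · refine (Finset.sum_eq_zero fun i hi => ?_).trans_le zero_le
      exact Set.indicator_of_notMem (fun hxi => hx (hAP i hi hxi)) _
  have hsum : ∑ i ∈ S, μ (A i) ≤ K * μ P := by
    calc ∑ i ∈ S, μ (A i) = ∫⁻ x, ∑ i ∈ S, (A i).indicator 1 x ∂μ := by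
          rw [lintegral_finsetSum _ fun i _ => measurable_one.indicator (hA i)]
          simp only [lintegral_indicator_one (hA _)]
      _ ≤ ∫⁻ x, K * P.indicator 1 x ∂μ := lintegral_mono hpoint
      _ = K * μ P := by rw [lintegral_const_mul _ (measurable_one.indicator hP),
          lintegral_indicator_one hP]
  simp only [measureReal_def]
  rw [← ENNReal.toReal_natCast, ← ENNReal.toReal_mul,
    ← ENNReal.toReal_sum fun i _ => measure_ne_top μ _]
  exact ENNReal.toReal_mono (by finiteness) hsum

variable [IsProbabilityMeasure μ] [Fintype ι]

lemma measureReal_pi_setOf_forall_mem (I : Finset ι) (t : ι → Set α) :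
    (Measure.pi fun _ : ι => μ).real {ω | ∀ i ∈ I, ω i ∈ t i} = ∏ i ∈ I, μ.real (t i) := by
  classical
  have hpi : {ω : ι → α | ∀ i ∈ I, ω i ∈ t i} =
      Set.univ.pi fun i => if i ∈ I then t i else .univ := by
    ext ω; simp only [Set.mem_ofPred_eq, Set.mem_pi, Set.mem_univ, true_implies]
    exact forall_congr' fun i => by split_ifs with hi <;> simp [hi]
  rw [hpi, measureReal_def, Measure.pi_pi, ENNReal.toReal_prod, ← Fintype.prod_ite_mem I]
  exact Finset.prod_congr rfl fun i _ => by split_ifs <;> simp [measureReal_def]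

variable [MeasurableSingletonClass α] [Finite α] [DecidableEq ι]

lemma measureReal_pi_forall_not_rel_le (R : α → α → Prop) (H : Set α) {q : ℝ}
    (hq : ∀ x ∈ H, μ.real {y | ¬ R x y} ≤ q) {I J : Finset ι} (hIJ : Disjoint I J) :
    (Measure.pi fun _ : ι => μ).real {ω | ∀ i j, ¬ R (ω i) (ω j)} ≤
      (1 - μ.real H) ^ #I + #I * (μ.real H * q ^ #J) := by
  set ν := Measure.pi fun _ : ι => μ
  -- `ω ∈ T i x` iff `ω i = x` and `¬ R x (ω j)` for every `j ∈ J`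
  set T : ι → α → Set (ι → α) := fun i x =>
    {ω | ∀ j ∈ insert i J, ω j ∈ Function.update (fun _ => {y | ¬ R x y}) i {x} j}
  have hcover : {ω | ∀ i j, ¬ R (ω i) (ω j)} ⊆
      {ω | ∀ i ∈ I, ω i ∈ Hᶜ} ∪ ⋃ i ∈ I, ⋃ x ∈ H.toFinite.toFinset, T i x := by
    intro ω hω
    by_cases hA : ∀ i ∈ I, ω i ∈ Hᶜ
    · exact Or.inl hA
    push Not at hA
    obtain ⟨i, hi, hiH⟩ := hA
    refine Or.inr (Set.mem_biUnion hi (Set.mem_biUnion (by simpa using hiH) ?_))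
    intro j hj
    rcases eq_or_ne j i with rfl | hji
    · simp
    · simpa [Function.update_of_ne hji] using hω i j
  have hT : ∀ i ∈ I, ∀ x ∈ H, ν.real (T i x) ≤ μ.real {x} * q ^ #J := by
    intro i hi x hx
    have hiJ : i ∉ J := Finset.disjoint_left.mp hIJ hi
    rw [measureReal_pi_setOf_forall_mem, Finset.prod_insert hiJ, Function.update_self]
    refine mul_le_mul_of_nonneg_left ?_ measureReal_nonneg
    calc ∏ j ∈ J, μ.real (Function.update (fun _ => {y | ¬ R x y}) i {x} j)
        = ∏ j ∈ J, μ.real {y | ¬ R x y} := Finset.prod_congr rfl fun j hj => by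
          rw [Function.update_of_ne (ne_of_mem_of_not_mem hj hiJ)]
      _ ≤ ∏ _j ∈ J, q := Finset.prod_le_prod (fun _ _ => measureReal_nonneg) fun _ _ => hq x hx
      _ = q ^ #J := Finset.prod_const q
  calc ν.real {ω | ∀ i j, ¬ R (ω i) (ω j)}
      ≤ ν.real {ω | ∀ i ∈ I, ω i ∈ Hᶜ} + ∑ i ∈ I, ∑ x ∈ H.toFinite.toFinset, ν.real (T i x) :=
        (measureReal_mono hcover).trans <| (measureReal_union_le _ _).trans <|
          add_le_add le_rfl ((measureReal_biUnion_finset_le _ _).trans <|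
            Finset.sum_le_sum fun i _ => measureReal_biUnion_finset_le _ _)
    _ ≤ (1 - μ.real H) ^ #I + ∑ i ∈ I, ∑ x ∈ H.toFinite.toFinset, μ.real {x} * q ^ #J := by
        rw [measureReal_pi_setOf_forall_mem, Finset.prod_const,
          probReal_compl_eq_one_sub H.toFinite.measurableSet]
        gcongr with i hi x hx
        exact hT i hi x (by simpa using hx)
    _ = (1 - μ.real H) ^ #I + #I * (μ.real H * q ^ #J) := by
        rw [← Finset.sum_mul, sum_measureReal_singleton, Set.Finite.coe_toFinset,
          Finset.sum_const, nsmul_eq_mul]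

end Measure

section Estimates

open Real

lemma one_sub_pow_le_one_sixth {h : ℝ} {k : ℕ} (h1 : h ≤ 1) (hk : 3 ≤ h * k) :
    (1 - h) ^ k ≤ 1 / 6 := by
  have hk0 : (k : ℝ) ≠ 0 := by rintro hk0; rw [hk0, mul_zero] at hk; norm_num at hk
  have hexp : (6 : ℝ) ≤ exp 3 := by nlinarith [quadratic_le_exp_of_nonneg (x := 3) (by norm_num)]
  calc (1 - h) ^ k = (1 - h * k / k) ^ k := by rw [mul_div_cancel_right₀ h hk0]
    _ ≤ exp (-(h * k)) := one_sub_div_pow_le_exp_neg (mul_le_of_le_one_left k.cast_nonneg h1)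
    _ ≤ exp (-3) := exp_le_exp.mpr (neg_le_neg hk)
    _ ≤ 1 / 6 := by rw [exp_neg, one_div]; exact inv_anti₀ (by norm_num) hexp

lemma self_le_exp_half {x : ℝ} (hx : 0 ≤ x) : x ≤ exp (x / 2) := by
  nlinarith [quadratic_le_exp_of_nonneg (x := x / 2) (by positivity), sq_nonneg (x - 2)]

lemma nat_mul_one_sub_inv_sqrt_pow_le {n : ℝ} {k p : ℕ} (hn : 36 ≤ n) (hkp : k ≤ p)
    (hp : 2 * √n * log n ≤ p) : k * (1 - 1 / √n) ^ p ≤ 1 / 6 := by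
  have hn0 : 0 < n := by linarith
  have ha : 6 ≤ √n := by
    rw [show (6 : ℝ) = √36 by rw [show (36 : ℝ) = 6 ^ 2 by norm_num, sqrt_sq (by norm_num)]]
    exact sqrt_le_sqrt hn
  have ha0 : 0 < √n := by linarith
  set x := (p : ℝ) / √n
  have hpx : (p : ℝ) = √n * x := (mul_div_cancel₀ _ ha0.ne').symm
  have hx : 2 * log n ≤ x := (le_div_iff₀ ha0).mpr (by linarith)
  have hq : 0 ≤ 1 - 1 / √n := by
    rw [sub_nonneg, div_le_one ha0]; linarith
  calc k * (1 - 1 / √n) ^ p ≤ p * exp (-x) := by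
        refine mul_le_mul (by exact_mod_cast hkp) ?_ (by positivity) (by positivity)
        calc (1 - 1 / √n) ^ p ≤ exp (-(1 / √n)) ^ p :=
              pow_le_pow_left₀ hq (one_sub_le_exp_neg _) p
          _ = exp (-x) := by rw [← exp_nat_mul, hpx]; congr 1; field_simp
    _ = √n * (x * exp (-x)) := by rw [hpx, mul_assoc]
    _ ≤ √n * (exp (x / 2) * exp (-x)) := by gcongr; exact self_le_exp_half (by positivity)
    _ = √n * exp (-(x / 2)) := by rw [← exp_add]; ring_nf
    _ ≤ √n * exp (-log n) := by gcongr; linarith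
    _ = 1 / √n := by
        rw [exp_neg, exp_log hn0]; nth_rewrite 2 [← mul_self_sqrt hn0.le]; field_simp
    _ ≤ 1 / 6 := one_div_le_one_div_of_le (by norm_num) ha

lemma nine_le_mul_and_four_mul_le {ε r L h ℓ m : ℝ} (hε0 : 0 < ε) (hε1 : ε ≤ 1) (hr : 0 < r)
    (hL : 1 ≤ L) (hℓ : 1 ≤ ℓ) (hh : 0 ≤ h) (hheavy : ε ^ 2 ≤ 8 * (ℓ + 1) * h * (r * L))
    (hm : 144 * (ε⁻¹ ^ 3 * r * ℓ * L ^ 2) ≤ m) : 9 ≤ h * m ∧ 4 * r * L ≤ m := by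
  have hmε : 144 * (r * ℓ * L ^ 2) ≤ m * ε ^ 3 := by
    have := mul_le_mul_of_nonneg_right hm (pow_pos hε0 3).le
    rwa [show 144 * (ε⁻¹ ^ 3 * r * ℓ * L ^ 2) * ε ^ 3 = 144 * (r * ℓ * L ^ 2) by field_simp]
      at this
  have hm0 : 0 ≤ m :=
    nonneg_of_mul_nonneg_left ((by positivity : (0 : ℝ) ≤ _).trans hmε) (by positivity)
  constructor
  · have h9 : 9 * ε ^ 2 ≤ (h * m * ε) * ε ^ 2 :=
      calc 9 * ε ^ 2 ≤ 9 * L * (8 * (2 * ℓ) * h * (r * L)) := by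
            nlinarith [hheavy.trans (by gcongr; linarith : _ ≤ 8 * (2 * ℓ) * h * (r * L))]
        _ = h * (144 * (r * ℓ * L ^ 2)) := by ring
        _ ≤ h * (m * ε ^ 3) := by gcongr
        _ = (h * m * ε) * ε ^ 2 := by ring
    calc (9 : ℝ) ≤ h * m * ε := le_of_mul_le_mul_right h9 (by positivity)
      _ ≤ h * m := mul_le_of_le_one_right (by positivity) hε1
  · nlinarith [mul_le_of_le_one_right hm0 (pow_le_one₀ (n := 3) hε0.le hε1),
      mul_le_mul_of_nonneg_left hℓ hr.le]

end Estimates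

section Walks

variable {V : Type} {G : SimpleGraph V} {s : V} {ℓ : ℕ}

instance [Finite V] : Finite (WalkSpace G s ℓ) := by
  classical
  have := Fintype.ofFinite V
  have (t : V) : Finite {w : G.Walk s t // w.length ≤ ℓ} :=
    Finite.of_equiv {w : G.Walk s t // w.length < ℓ + 1}
      (Equiv.subtypeEquivRight fun _ => Nat.lt_succ_iff)
  exact inferInstanceAs (Finite (Σ t : V, {w : G.Walk s t // w.length ≤ ℓ}))

instance : MeasurableSingletonClass (WalkSpace G s ℓ) := ⟨fun _ => trivial⟩

lemma inducedSub_mono {T T' : Set V} (h : T ⊆ T') : inducedSub G T ≤ inducedSub G T' :=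
  fun _ _ huv => ⟨h huv.1, h huv.2.1, huv.2.2⟩

lemma inducedSub_eq_bot_of_subsingleton {T : Set V} (hT : T.Subsingleton) :
    inducedSub G T = ⊥ := by
  ext u v
  exact iff_false_intro fun huv => G.loopless.irrefl u (hT huv.1 huv.2.1 ▸ huv.2.2)

lemma not_formsCycle_of_isAcyclic {ι : Type*} {Ws : ι → WalkSpace G s ℓ}
    (h : (inducedSub G (⋃ i, {v | Reaches (Ws i) v})).IsAcyclic) (i j : ι) :
    ¬ FormsCycle (Ws i) (Ws j) :=
  not_not.mpr <| h.anti <| inducedSub_mono <|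
    Set.union_subset (Set.subset_iUnion_of_subset i le_rfl) (Set.subset_iUnion_of_subset j le_rfl)

lemma card_support_toFinset_le [DecidableEq V] (W : WalkSpace G s ℓ) :
    #W.2.1.support.toFinset ≤ ℓ + 1 :=
  (List.toFinset_card_le _).trans (W.2.1.length_support.trans_le (Nat.succ_le_succ W.2.2))

lemma eq_of_reaches_of_length_zero [DecidableEq V] (W : WalkSpace G s 0) {v : V}
    (hv : Reaches W v) : s = v :=
  (W.2.1.takeUntil v hv).eq_of_length_eq_zero <|
    Nat.le_zero.mp ((W.2.1.length_takeUntil_le_length hv).trans W.2.2)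

lemma one_le_of_formsCycle [DecidableEq V] {W W' : WalkSpace G s ℓ} (h : FormsCycle W W') :
    1 ≤ ℓ := by
  refine Nat.one_le_iff_ne_zero.mpr fun hℓ => h ?_
  subst hℓ
  have hsub : {v | Reaches W v} ∪ {v | Reaches W' v} ⊆ {s} := by
    rintro v (hv | hv) <;> exact (eq_of_reaches_of_length_zero _ hv).symm
  rw [inducedSub_eq_bot_of_subsingleton (Set.subsingleton_singleton.anti hsub)]
  exact isAcyclic_bot

variable [Fintype V] (μ : Measure (WalkSpace G s ℓ))

lemma one_le_of_measureReal_heavy_pos [DecidableEq V] (hpos : 0 < μ.real {W | Heavy μ W}) :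
    1 ≤ ℓ := by
  obtain ⟨W, hW⟩ := nonempty_of_measureReal_ne_zero hpos.ne'
  have hcyc : 0 < cycProb μ W := lt_of_le_of_lt (by positivity) hW
  obtain ⟨W', hW'⟩ := nonempty_of_measureReal_ne_zero hcyc.ne'
  exact one_le_of_formsCycle hW'

lemma measureReal_not_formsCycle_le [IsProbabilityMeasure μ] {W : WalkSpace G s ℓ}
    (hW : Heavy μ W) : μ.real {W' | ¬ FormsCycle W W'} ≤ 1 - 1 / √(Fintype.card V) := by
  rw [← Set.compl_ofPred, probReal_compl_eq_one_sub MeasurableSpace.measurableSet_top]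
  exact sub_le_sub_left hW.le 1

variable [DecidableEq V] [IsFiniteMeasure μ]

lemma sum_qH_le (S : Finset V) : ∑ v ∈ S, qH μ v ≤ (ℓ + 1) * μ.real {W | Heavy μ W} := by
  have := sum_measureReal_le_mul_of_multiplicity_le μ S (fun v => {W | Heavy μ W ∧ Reaches W v})
    (fun _ => MeasurableSpace.measurableSet_top) MeasurableSpace.measurableSet_top
    (fun _ _ _ hW => hW.1) fun W => ⟨W.2.1.support.toFinset, card_support_toFinset_le W,
      fun _ _ hv => List.mem_toFinset.mpr hv.2⟩
  exact_mod_cast this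

lemma ncard_blue_mul_le (S : Finset V) (α : ℝ) :
    ({v | v ∈ S ∧ Blue μ α v}.ncard : ℝ) * (α / 4) ≤ (ℓ + 1) * μ.real {W | Heavy μ W} := by
  classical
  have hB : {v | v ∈ S ∧ Blue μ α v} = ↑(S.filter (Blue μ α)) := by ext; simp
  rw [hB, Set.ncard_coe_finset]
  calc (#(S.filter (Blue μ α)) : ℝ) * (α / 4) ≤ ∑ v ∈ S.filter (Blue μ α), qH μ v := by
        rw [← nsmul_eq_mul]
        exact card_nsmul_le_sum _ _ _ fun v hv => (Finset.mem_filter.mp hv).2.le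
    _ ≤ ∑ v ∈ S, qH μ v :=
        sum_le_sum_of_subset_of_nonneg (filter_subset _ _) fun _ _ _ => ENNReal.toReal_nonneg
    _ ≤ _ := sum_qH_le μ S

lemma sq_le_measureReal_heavy {S : Finset V} (hS : S.Nonempty) {ε α : ℝ} (hε : 0 < ε)
    (hα : 0 < α) (hn : 1 < (Fintype.card V : ℝ))
    (hαlow : ε / (√(#S * Fintype.card V) * Real.log (Fintype.card V)) ≤ α)
    (hblue : ε * #S / 2 < ({v | v ∈ S ∧ Blue μ α v}.ncard : ℝ)) :
    ε ^ 2 ≤ 8 * (ℓ + 1) * μ.real {W | Heavy μ W} *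
      (√(Fintype.card V) * Real.log (Fintype.card V)) := by
  set n := (Fintype.card V : ℝ)
  have hS1 : (1 : ℝ) ≤ #S := by exact_mod_cast hS.card_pos
  have hlog : 0 < Real.log n := Real.log_pos hn
  have hsqrt : √(#S * n) ≤ #S * √n := by
    rw [Real.sqrt_mul (by positivity)]
    gcongr
    exact Real.sqrt_le_self_iff.mpr (Or.inr hS1)
  have hεα : ε ≤ #S * α * (√n * Real.log n) :=
    calc ε ≤ α * (√(#S * n) * Real.log n) := (div_le_iff₀ (by positivity)).mp hαlow
      _ ≤ α * (#S * √n * Real.log n) := by gcongr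
      _ = #S * α * (√n * Real.log n) := by ring
  have hheavy : ε * (#S * α) ≤ 8 * (ℓ + 1) * μ.real {W | Heavy μ W} := by
    nlinarith [ncard_blue_mul_le μ S α]
  calc ε ^ 2 = ε * ε := sq ε
    _ ≤ ε * (#S * α * (√n * Real.log n)) := by gcongr
    _ = ε * (#S * α) * (√n * Real.log n) := by ring
    _ ≤ _ := by gcongr

end Walks

section Cycles

variable {V : Type} [Fintype V] {G : SimpleGraph V} {s : V} {ℓ : ℕ}
  (μ : Measure (WalkSpace G s ℓ)) [IsProbabilityMeasure μ]

lemma two_thirds_le_measureReal_pi_not_isAcyclic {m : ℕ} (hn : 36 ≤ (Fintype.card V : ℝ))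
    (hmh : 9 ≤ μ.real {W | Heavy μ W} * m)
    (hmn : 4 * √(Fintype.card V) * Real.log (Fintype.card V) ≤ m) :
    2 / 3 ≤ (Measure.pi fun _ : Fin m => μ).real
      {Ws | ¬ (inducedSub G (⋃ i, {v | Reaches (Ws i) v})).IsAcyclic} := by
  obtain ⟨I, -, hI⟩ := exists_subset_card_eq (s := (univ : Finset (Fin m))) (n := m / 2)
    (by rw [card_univ, Fintype.card_fin]; omega)
  have hm9 : 9 ≤ m := by
    exact_mod_cast hmh.trans (mul_le_of_le_one_left m.cast_nonneg measureReal_le_one)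
  have hk : 3 ≤ μ.real {W | Heavy μ W} * (m / 2 : ℕ) := by
    have : (m : ℝ) ≤ 3 * (m / 2 : ℕ) := by exact_mod_cast (by omega : m ≤ 3 * (m / 2))
    nlinarith [measureReal_nonneg (μ := μ) (s := {W | Heavy μ W})]
  have hp : 2 * √(Fintype.card V) * Real.log (Fintype.card V) ≤ (m - m / 2 : ℕ) := by
    have : (m : ℝ) ≤ 2 * (m - m / 2 : ℕ) := by exact_mod_cast (by omega : m ≤ 2 * (m - m / 2))
    linarith
  have hIc : #Iᶜ = m - m / 2 := by rw [card_compl, hI, Fintype.card_fin]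
  have hq : 0 ≤ 1 - 1 / √(Fintype.card V) := by
    rw [sub_nonneg, div_le_one (by positivity)]
    exact Real.one_le_sqrt.mpr (by linarith)
  have hfail : (Measure.pi fun _ : Fin m => μ).real
      {Ws | (inducedSub G (⋃ i, {v | Reaches (Ws i) v})).IsAcyclic} ≤ 1 / 6 + 1 / 6 :=
    calc _ ≤ (Measure.pi fun _ : Fin m => μ).real {Ws | ∀ i j, ¬ FormsCycle (Ws i) (Ws j)} :=
          measureReal_mono fun Ws hWs => not_formsCycle_of_isAcyclic hWs
      _ ≤ _ := measureReal_pi_forall_not_rel_le μ FormsCycle {W | Heavy μ W}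
          (fun _ hW => measureReal_not_formsCycle_le μ hW) disjoint_compl_right
      _ ≤ 1 / 6 + 1 / 6 := by
          rw [hI, hIc]
          refine add_le_add (one_sub_pow_le_one_sixth measureReal_le_one hk) ?_
          calc ((m / 2 : ℕ) : ℝ) * (μ.real {W | Heavy μ W} * _)
              ≤ (m / 2 : ℕ) * (1 * (1 - 1 / √(Fintype.card V)) ^ (m - m / 2)) := by
                gcongr; exact measureReal_le_one
            _ ≤ 1 / 6 := by rw [one_mul]; exact nat_mul_one_sub_inv_sqrt_pow_le hn (by omega) hp
  rw [← Set.compl_ofPred, probReal_compl_eq_one_sub (Set.toFinite _).measurableSet]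
  linarith

end Cycles

end CF

/-- If `s` is special with `α ≥ ε/(√(|S|n) log n)` and more than `ε|S|/2`
vertices of `S` are blue, then `m = c·ε⁻³·√n·ℓ·log²n` independent `μ`-random walks span a
subgraph containing a cycle with probability at least `2/3` (for a sufficiently large
absolute constant `c` and sufficiently large `n`). -/
theorem stmt6 : ∃ c₀ n₀ : ℝ, 0 < c₀ ∧
    ∀ (V : Type) [Fintype V] [DecidableEq V] (G : SimpleGraph V) [DecidableRel G.Adj],
    ∀ (d : ℕ), 1 ≤ d → (∀ v, G.degree v ≤ d) →
    n₀ ≤ (Fintype.card V : ℝ) →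
    ∀ (ε : ℝ), 0 < ε → ε < 1 →
    ∀ (S : Finset V) (s : V), s ∈ S →
    ∀ (ℓ : ℕ) (μ : MeasureTheory.Measure (CF.WalkSpace G s ℓ)),
      MeasureTheory.IsProbabilityMeasure μ →
    ∀ (α : ℝ), 0 < α →
      ε / (Real.sqrt ((S.card : ℝ) * Fintype.card V) * Real.log (Fintype.card V)) ≤ α →
      CF.Special μ S α →
      ε * S.card / 2 < ({v | v ∈ S ∧ CF.Blue μ α v}.ncard : ℝ) →
    ∀ (m : ℕ),
      c₀ * (ε⁻¹ ^ 3 * Real.sqrt (Fintype.card V) * ℓ * Real.log (Fintype.card V) ^ 2)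
        ≤ (m : ℝ) →
    (2 : ℝ) / 3 ≤
      ((MeasureTheory.Measure.pi fun _ : Fin m => μ)
        {Ws | ¬ (CF.inducedSub G (⋃ i, {v | CF.Reaches (Ws i) v})).IsAcyclic}).toReal := by
  refine ⟨144, 36, by norm_num, ?_⟩
  intro V _ _ G _ _ _ _ hn ε hε0 hε1 S s hsS ℓ μ _ α hα hαlow _ hblue m hm
  have hr : 0 < √(Fintype.card V) := Real.sqrt_pos.mpr (by linarith)
  have hL : 1 ≤ Real.log (Fintype.card V) := by
    rw [Real.le_log_iff_exp_le (by linarith)]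
    exact Real.exp_one_lt_d9.le.trans (by linarith)
  have hheavy := CF.sq_le_measureReal_heavy μ ⟨s, hsS⟩ hε0 hα (by linarith) hαlow hblue
  have hh : 0 < μ.real {W | CF.Heavy μ W} :=
    pos_of_mul_pos_right (pos_of_mul_pos_left ((pow_pos hε0 2).trans_le hheavy)
      (by positivity)) (by positivity)
  have hℓ : (1 : ℝ) ≤ ℓ := by exact_mod_cast CF.one_le_of_measureReal_heavy_pos μ hh
  obtain ⟨hmh, hmn⟩ := CF.nine_le_mul_and_four_mul_le hε0 hε1.le hr hL hℓ hh.le hheavy hm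
  exact CF.two_thirds_le_measureReal_pi_not_isAcyclic μ hn hmh hmn
end

section
/- Assume s is special for S with parameter α, and let (u,v) be a recessive edge of G_S such that neither u nor v is blue. Then Pr(E_u) ≥ α²/16 or Pr(E_v) ≥ α²/16, where the probability is over a pair of independent μ-random walks. -/
open MeasureTheory SimpleGraph

/-!
Let `w` be an endpoint of the edge that is not isolated. Either some path carries more than half
of the mass `q_w` of walks reaching `w`, and then (`w` not being isolated) the other paths still
carry at least `α/2`; discarding the heavy walks (mass at most `α/4`) leaves two disjoint sets of
light walks of mass at least `α/4` each, inducing different paths. Or no path carries more than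
`q_w/2`: a light walk reaching `w` then shares its induced path with an independent walk with
probability at most `q_w/2`, so `Pr(E_w) ≥ x (x - q_w/2)`, where `x ≥ q_w - α/4` is the mass of
light walks reaching `w`.

If both endpoints are isolated, recessiveness forces both dominant paths to avoid the edge
`(u,v)`, so together with it they close a cycle; light walks inducing each dominant path have
mass at least `α/4`.
-/

open scoped ENNReal

section ProductMeasure

variable {X Y : Type*} [MeasurableSpace X] [MeasurableSpace Y]

theorem MeasureTheory.Measure.prod_le_mul_of_forall_measure_preimage_le (μ : Measure X)
    (ν : Measure Y) [SFinite ν] {T : Set (X × Y)} (hT : MeasurableSet T) {A : Set X}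
    (hA : MeasurableSet A) (hTA : T ⊆ A ×ˢ Set.univ) {c : ℝ≥0∞}
    (hc : ∀ x ∈ A, ν (Prod.mk x ⁻¹' T) ≤ c) :
    μ.prod ν T ≤ c * μ A := by
  rw [Measure.prod_apply hT, ← lintegral_indicator_const hA]
  refine lintegral_mono fun x => ?_
  by_cases hx : x ∈ A
  · simpa [Set.indicator_of_mem hx] using hc x hx
  · have hempty : Prod.mk x ⁻¹' T = ∅ :=
      Set.eq_empty_of_forall_notMem fun y hy => hx (hTA hy).1
    simp [hempty]

theorem MeasureTheory.Measure.measureReal_prod_le_mul_of_forall_measureReal_preimage_le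
    (μ : Measure X) (ν : Measure Y) [IsFiniteMeasure μ] [IsFiniteMeasure ν]
    {T : Set (X × Y)} (hT : MeasurableSet T) {A : Set X} (hA : MeasurableSet A)
    (hTA : T ⊆ A ×ˢ Set.univ) {c : ℝ} (hc0 : 0 ≤ c)
    (hc : ∀ x ∈ A, ν.real (Prod.mk x ⁻¹' T) ≤ c) :
    (μ.prod ν).real T ≤ c * μ.real A := by
  have h := μ.prod_le_mul_of_forall_measure_preimage_le ν hT hA hTA (c := ENNReal.ofReal c)
    fun x hx => (ENNReal.le_ofReal_iff_toReal_le (measure_ne_top _ _) hc0).2 (hc x hx)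
  simpa [measureReal_def, ENNReal.toReal_mul, ENNReal.toReal_ofReal hc0] using
    ENNReal.toReal_mono (by finiteness) h

theorem MeasureTheory.Measure.mul_le_measureReal_prod_of_prod_subset (μ : Measure X)
    (ν : Measure Y) [IsFiniteMeasure μ] [IsFiniteMeasure ν] {A : Set X} {B : Set Y}
    {E : Set (X × Y)} (hE : A ×ˢ B ⊆ E) {a b : ℝ} (ha : 0 ≤ a) (haA : a ≤ μ.real A)
    (hbB : b ≤ ν.real B) :
    a * b ≤ (μ.prod ν).real E :=
  calc a * b ≤ μ.real A * ν.real B := mul_le_mul_of_nonneg haA hbB ha measureReal_nonneg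
    _ = (μ.prod ν).real (A ×ˢ B) := (measureReal_prod_prod A B).symm
    _ ≤ (μ.prod ν).real E := measureReal_mono hE

end ProductMeasure

theorem SimpleGraph.not_isAcyclic_fromEdgeSet_of_walks_avoiding {V : Type*} {G : SimpleGraph V}
    {a u v : V} (huv : u ≠ v) (Pu : G.Walk a u) (Pv : G.Walk a v)
    (hu : s(u, v) ∉ Pu.edges) (hv : s(u, v) ∉ Pv.edges) :
    ¬ (fromEdgeSet ({e | e ∈ Pv.edges} ∪ {e | e ∈ Pu.edges} ∪ {s(u, v)})).IsAcyclic := by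
  set H := fromEdgeSet ({e | e ∈ Pv.edges} ∪ {e | e ∈ Pu.edges} ∪ {s(u, v)})
  have hmem : ∀ e ∈ Pv.edges ++ Pu.edges, e ∈ H.edgeSet := by
    intro e he
    rw [edgeSet_fromEdgeSet]
    rcases List.mem_append.1 he with he | he
    · exact ⟨Or.inl (Or.inl he), G.not_isDiag_of_mem_edgeSet (Pv.edges_subset_edgeSet he)⟩
    · exact ⟨Or.inl (Or.inr he), G.not_isDiag_of_mem_edgeSet (Pu.edges_subset_edgeSet he)⟩
  intro hacyclic
  have hbridge : H.IsBridge s(u, v) :=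
    isAcyclic_iff_forall_adj_isBridge.1 hacyclic ((fromEdgeSet_adj _).2 ⟨Or.inr rfl, huv⟩)
  have hcycle := isBridge_iff_forall_walk_mem_edges.1 hbridge
    ((Pu.transfer H fun e he => hmem e (List.mem_append_right _ he)).reverse.append
      (Pv.transfer H fun e he => hmem e (List.mem_append_left _ he)))
  simp only [Walk.edges_append, Walk.edges_reverse, Walk.edges_transfer, List.mem_append,
    List.mem_reverse] at hcycle
  exact hcycle.elim hu hv

namespace CF

variable {V : Type} {G : SimpleGraph V} {s : V} {ℓ : ℕ}

instance [Countable V] : Countable (WalkSpace G s ℓ) :=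
  have (t : V) : Countable (G.Walk s t) := Walk.support_injective.countable
  inferInstanceAs (Countable (Σ t : V, {w : G.Walk s t // w.length ≤ ℓ}))

variable (μ : Measure (WalkSpace G s ℓ)) [IsFiniteMeasure μ] {α : ℝ}

theorem edge_notMem_edges_of_isDominantPath [DecidableEq V] {S : Finset V} {u v : V}
    (huS : u ∈ S) (hvS : v ∈ S) (hadj : G.Adj u v) (hnd : ¬ Dominant μ S α u v)
    {P : G.Walk s v} (hP : IsDominantPath μ α v P) : s(u, v) ∉ P.edges := by
  intro hPuv
  have havoid : α / 2 ≤ μ.real {W | ∃ h : Reaches W v, s(u, v) ∉ (inducedPath W v h).edges} :=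
    not_lt.1 fun hlt => hnd ⟨huS, hvS, hadj, ⟨P, hP⟩, hlt⟩
  have hother : μ.real {W | ∃ h : Reaches W v, inducedPath W v h ≠ P} < α / 2 := hP.2.2
  have hsub : {W : WalkSpace G s ℓ | ∃ h : Reaches W v, s(u, v) ∉ (inducedPath W v h).edges} ⊆
      {W | ∃ h : Reaches W v, inducedPath W v h ≠ P} := by
    rintro W ⟨h, hW⟩
    exact ⟨h, fun heq => hW (heq ▸ hPuv)⟩
  linarith [measureReal_mono (μ := μ) hsub]

theorem sub_qH_le_measureReal_light [Fintype V] {w : V} (p : WalkSpace G s ℓ → Prop)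
    (hp : ∀ W, p W → Reaches W w) :
    μ.real {W | p W} - qH μ w ≤ μ.real {W | Light μ W ∧ p W} :=
  le_trans le_measureReal_sdiff <| measureReal_mono fun W ⟨hpW, hW⟩ =>
    ⟨fun hheavy => hW ⟨hheavy, hp W hpW⟩, hpW⟩

variable [Fintype V] [DecidableEq V] (S : Finset V)

theorem quarter_le_measureReal_light_of_isDominantPath {v : V}
    (hq : α ≤ μ.real {W | Reaches W v}) (hblue : ¬ Blue μ α v) {P : G.Walk s v}
    (hP : IsDominantPath μ α v P) :
    α / 4 ≤ μ.real {W | Light μ W ∧ ∃ h : Reaches W v, inducedPath W v h = P} := by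
  have hother : μ.real {W | ∃ h : Reaches W v, inducedPath W v h ≠ P} < α / 2 := hP.2.2
  have hsplit : μ.real {W | Reaches W v} ≤
      μ.real {W | ∃ h : Reaches W v, inducedPath W v h = P} +
        μ.real {W | ∃ h : Reaches W v, inducedPath W v h ≠ P} :=
    (measureReal_mono fun W h => (em (inducedPath W v h = P)).imp (⟨h, ·⟩) (⟨h, ·⟩)).trans
      (measureReal_union_le _ _)
  have hlight := sub_qH_le_measureReal_light μ
    (fun W => ∃ h : Reaches W v, inducedPath W v h = P) fun _ ⟨h, _⟩ => h
  linarith [not_lt.1 hblue]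

theorem le_eventE_of_majority_path {w : V} (hα : 0 ≤ α) (hblue : ¬ Blue μ α w)
    {P : G.Walk s w}
    (hmaj : α / 2 ≤ μ.real {W | ∃ h : Reaches W w, inducedPath W w h = P})
    (hother : α / 2 ≤ μ.real {W | ∃ h : Reaches W w, inducedPath W w h ≠ P}) :
    α ^ 2 / 16 ≤ (μ.prod μ).real {p | EventE μ S w p} := by
  have hsame := sub_qH_le_measureReal_light μ
    (fun W => ∃ h : Reaches W w, inducedPath W w h = P) fun _ ⟨h, _⟩ => h
  have hdiff := sub_qH_le_measureReal_light μ
    (fun W => ∃ h : Reaches W w, inducedPath W w h ≠ P) fun _ ⟨h, _⟩ => h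
  have hrect : {W | Light μ W ∧ ∃ h : Reaches W w, inducedPath W w h = P} ×ˢ
      {W | Light μ W ∧ ∃ h : Reaches W w, inducedPath W w h ≠ P} ⊆
      {p | EventE μ S w p} := by
    rintro ⟨W₁, W₂⟩ ⟨⟨hl₁, h₁, hP₁⟩, hl₂, h₂, hP₂⟩
    exact ⟨hl₁, hl₂, Or.inl ⟨h₁, h₂, hP₁ ▸ Ne.symm hP₂⟩⟩
  have hqH := not_lt.1 hblue
  calc α ^ 2 / 16 = α / 4 * (α / 4) := by ring
    _ ≤ _ := μ.mul_le_measureReal_prod_of_prod_subset μ hrect (by positivity)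
      (by linarith) (by linarith)

theorem le_eventE_of_no_majority_path {w : V} (hα : 0 ≤ α)
    (hq : α ≤ μ.real {W | Reaches W w}) (hblue : ¬ Blue μ α w)
    (hmaj : ∀ P : G.Walk s w, P.IsPath →
      μ.real {W | ∃ h : Reaches W w, inducedPath W w h = P} ≤ μ.real {W | Reaches W w} / 2) :
    α ^ 2 / 16 ≤ (μ.prod μ).real {p | EventE μ S w p} := by
  set q := μ.real {W | Reaches W w}
  set L := {W | Light μ W ∧ Reaches W w}
  set C : Set (WalkSpace G s ℓ × WalkSpace G s ℓ) :=
    {p | p.1 ∈ L ∧ p.2 ∈ L ∧ ∃ h₁ h₂, inducedPath p.1 w h₁ = inducedPath p.2 w h₂}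
  have hL : q - α / 4 ≤ μ.real L := by
    linarith [sub_qH_le_measureReal_light μ (Reaches · w) fun _ => id, not_lt.1 hblue]
  have hC : (μ.prod μ).real C ≤ q / 2 * μ.real L :=
    μ.measureReal_prod_le_mul_of_forall_measureReal_preimage_le μ .of_discrete .of_discrete
      (fun p hp => ⟨hp.1, trivial⟩) (by positivity) fun W hW => by
        refine le_trans (measureReal_mono ?_) (hmaj (inducedPath W w hW.2) (Walk.bypass_isPath _))
        rintro W' ⟨-, -, _, h', heq⟩
        exact ⟨h', heq.symm⟩
  have hE : L ×ˢ L \ C ⊆ {p | EventE μ S w p} := by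
    rintro ⟨W₁, W₂⟩ ⟨⟨hW₁, hW₂⟩, hne⟩
    exact ⟨hW₁.1, hW₂.1, Or.inl ⟨hW₁.2, hW₂.2, fun heq => hne ⟨hW₁, hW₂, _, _, heq⟩⟩⟩
  calc α ^ 2 / 16 ≤ 3 * α / 4 * (α / 4) := by nlinarith
    _ ≤ μ.real L * (μ.real L - q / 2) :=
      mul_le_mul_of_nonneg (by linarith) (by linarith) (by positivity) (by linarith)
    _ ≤ (μ.prod μ).real (L ×ˢ L) - (μ.prod μ).real C := by
      rw [measureReal_prod_prod]; linarith
    _ ≤ (μ.prod μ).real (L ×ˢ L \ C) := le_measureReal_sdiff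
    _ ≤ _ := measureReal_mono hE

theorem le_eventE_of_not_isolated {w : V} (hα : 0 ≤ α) (hq : α ≤ μ.real {W | Reaches W w})
    (hblue : ¬ Blue μ α w) (hniso : ¬ Isolated μ α w) :
    α ^ 2 / 16 ≤ (μ.prod μ).real {p | EventE μ S w p} := by
  by_cases hmaj : ∃ P : G.Walk s w, P.IsPath ∧
      μ.real {W | Reaches W w} / 2 < μ.real {W | ∃ h : Reaches W w, inducedPath W w h = P}
  · obtain ⟨P, hP, hhalf⟩ := hmaj
    exact le_eventE_of_majority_path μ S hα hblue (by linarith)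
      (not_lt.1 fun hlt => hniso ⟨P, hP, hhalf, hlt⟩)
  · push Not at hmaj
    exact le_eventE_of_no_majority_path μ S hα hq hblue hmaj

theorem le_eventE_of_isolated_of_not_dominant {u v : V} (hα : 0 ≤ α)
    (huq : α ≤ μ.real {W | Reaches W u}) (hvq : α ≤ μ.real {W | Reaches W v})
    (hu : ¬ Blue μ α u) (hv : ¬ Blue μ α v) (huS : u ∈ S) (hvS : v ∈ S) (hadj : G.Adj u v)
    (hnuv : ¬ Dominant μ S α u v) (hnvu : ¬ Dominant μ S α v u)
    (hIu : Isolated μ α u) (hIv : Isolated μ α v) :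
    α ^ 2 / 16 ≤ (μ.prod μ).real {p | EventE μ S v p} := by
  obtain ⟨Pu, hPu⟩ := hIu
  obtain ⟨Pv, hPv⟩ := hIv
  have hPv_avoid := edge_notMem_edges_of_isDominantPath μ huS hvS hadj hnuv hPv
  have hPu_avoid : s(u, v) ∉ Pu.edges :=
    Sym2.eq_swap ▸ edge_notMem_edges_of_isDominantPath μ hvS huS hadj.symm hnvu hPu
  have hrect : {W | Light μ W ∧ ∃ h : Reaches W v, inducedPath W v h = Pv} ×ˢ
      {W | Light μ W ∧ ∃ h : Reaches W u, inducedPath W u h = Pu} ⊆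
      {p | EventE μ S v p} := by
    rintro ⟨W₁, W₂⟩ ⟨⟨hl₁, h₁, hP₁⟩, hl₂, h₂, hP₂⟩
    refine ⟨hl₁, hl₂, Or.inr ⟨u, huS, hvS, hadj, Or.inl ⟨h₁, h₂, ?_⟩⟩⟩
    rw [hP₁, hP₂]
    exact not_isAcyclic_fromEdgeSet_of_walks_avoiding hadj.ne Pu Pv hPu_avoid hPv_avoid
  calc α ^ 2 / 16 = α / 4 * (α / 4) := by ring
    _ ≤ _ := μ.mul_le_measureReal_prod_of_prod_subset μ hrect (by positivity)
      (quarter_le_measureReal_light_of_isDominantPath μ hvq hv hPv)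
      (quarter_le_measureReal_light_of_isDominantPath μ huq hu hPu)

end CF

theorem stmt7_general {V : Type} [Fintype V] [DecidableEq V]
    (G : SimpleGraph V)
    (S : Finset V) (s : V) (ℓ : ℕ)
    (μ : MeasureTheory.Measure (CF.WalkSpace G s ℓ)) [MeasureTheory.IsProbabilityMeasure μ]
    (α : ℝ) (hα : 0 < α) (hspec : CF.Special μ S α)
    (u v : V) (hrec : CF.Recessive μ S α u v)
    (hu : ¬ CF.Blue μ α u) (hv : ¬ CF.Blue μ α v) :
    α ^ 2 / 16 ≤ ((μ.prod μ) {p | CF.EventE μ S u p}).toReal ∨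
      α ^ 2 / 16 ≤ ((μ.prod μ) {p | CF.EventE μ S v p}).toReal := by
  obtain ⟨huS, hvS, hadj, hnuv, hnvu⟩ := hrec
  by_cases hIu : CF.Isolated μ α u
  · right
    by_cases hIv : CF.Isolated μ α v
    · exact CF.le_eventE_of_isolated_of_not_dominant μ S hα.le (hspec u huS) (hspec v hvS)
        hu hv huS hvS hadj hnuv hnvu hIu hIv
    · exact CF.le_eventE_of_not_isolated μ S hα.le (hspec v hvS) hv hIv
  · left
    exact CF.le_eventE_of_not_isolated μ S hα.le (hspec u huS) hu hIu

/-- If `(u,v)` is a recessive edge of `G_S` and neither `u` nor `v` is blue,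
then `Pr(E_u) ≥ α²/16` or `Pr(E_v) ≥ α²/16` over a pair of independent `μ`-random walks. -/
theorem stmt7 {V : Type} [Fintype V] [DecidableEq V]
    (G : SimpleGraph V) [DecidableRel G.Adj] (d : ℕ) (hd : 1 ≤ d)
    (hdeg : ∀ v, G.degree v ≤ d)
    (ε : ℝ) (hε0 : 0 < ε) (hε1 : ε < 1)
    (S : Finset V) (s : V) (hs : s ∈ S) (ℓ : ℕ)
    (μ : MeasureTheory.Measure (CF.WalkSpace G s ℓ)) [MeasureTheory.IsProbabilityMeasure μ]
    (α : ℝ) (hα : 0 < α) (hspec : CF.Special μ S α)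
    (u v : V) (hrec : CF.Recessive μ S α u v)
    (hu : ¬ CF.Blue μ α u) (hv : ¬ CF.Blue μ α v) :
    α ^ 2 / 16 ≤ ((μ.prod μ) {p | CF.EventE μ S u p}).toReal ∨
      α ^ 2 / 16 ≤ ((μ.prod μ) {p | CF.EventE μ S v p}).toReal :=
  stmt7_general G S s ℓ μ α hα hspec u v hrec hu hv
end

section
/- Let ν be a probability measure on a measurable space Ω, let f : Ω × Ω → {0,1} be measurable and symmetric, and let δ > 0 be such that for every w ∈ Ω, the probability over W′ ∼ ν that f(w, W′) = 1 is at most δ. Let W_1,…,W_m be independent ν-distributed random elements with m·δ ≥ 1, set p = E[f(W_1, W_2)] and X = Σ_{1≤i<j≤m} f(W_i, W_j). Then E[X] = (m choose 2)·p and Var(X) ≤ 7·δ·p·m³. -/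
/-!
Write `X = ∑ₑ Yₑ` with `Y_{ij} = f(W_i, W_j)` (`pairEval f (i, j)`), so that
`Var X = ∑_{e,e'} cov(Yₑ, Y_{e'})`. Disjoint edges give independent variables and contribute
nothing, `cov(Yₑ, Yₑ) ≤ E[Yₑ²] ≤ p`, and two edges sharing a vertex `a` have
`cov ≤ E[Y_{ab} Y_{ac}] = ∫ (∫ f x y dν(y))² dν(x) ≤ δ p`. An edge shares a vertex with at most
`4m` pairs, so `Var X ≤ m² (p + 4mδp) ≤ 5δpm³` as `mδ ≥ 1`.
-/

open MeasureTheory ProbabilityTheory Finset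

section Kernel

variable {Ω : Type*} [MeasurableSpace Ω] {ν : Measure Ω} {f : Ω → Ω → ℝ}

lemma integral_eq_measureReal_of_zero_or_one {g : Ω → ℝ} (hg : Measurable g)
    (h01 : ∀ x, g x = 0 ∨ g x = 1) : ∫ x, g x ∂ν = ν.real {x | g x = 1} := by
  have hind : g = {x | g x = 1}.indicator 1 := by
    ext x
    rcases h01 x with h | h <;> simp [h]
  conv_lhs => rw [hind]
  exact integral_indicator_one (hg (measurableSet_singleton 1))

lemma integrable_uncurry_of_le_one [IsFiniteMeasure ν] (hf : Measurable (Function.uncurry f))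
    (hf0 : ∀ a b, 0 ≤ f a b) (hf1 : ∀ a b, f a b ≤ 1) :
    Integrable (fun q : Ω × Ω => f q.1 q.2) (ν.prod ν) :=
  (integrable_const (1 : ℝ)).mono' hf.aestronglyMeasurable <| .of_forall fun q => by
    simpa [abs_of_nonneg (hf0 q.1 q.2)] using hf1 q.1 q.2

variable [IsProbabilityMeasure ν]

lemma integral_mul_of_common_vertex_le (hf : Measurable (Function.uncurry f))
    (hf0 : ∀ a b, 0 ≤ f a b) (hf1 : ∀ a b, f a b ≤ 1) {δ : ℝ}
    (hdeg : ∀ x, ∫ y, f x y ∂ν ≤ δ) :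
    ∫ x : Ω × Ω × Ω, f x.1 x.2.1 * f x.1 x.2.2 ∂(ν.prod (ν.prod ν))
      ≤ δ * ∫ q, f q.1 q.2 ∂(ν.prod ν) := by
  have hint : Integrable (fun x : Ω × Ω × Ω => f x.1 x.2.1 * f x.1 x.2.2)
      (ν.prod (ν.prod ν)) :=
    (integrable_const (1 : ℝ)).mono' (by fun_prop) <| .of_forall fun x => by
      rw [Real.norm_eq_abs, abs_mul, abs_of_nonneg (hf0 _ _), abs_of_nonneg (hf0 _ _)]
      exact mul_le_one₀ (hf1 _ _) (hf0 _ _) (hf1 _ _)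
  have hdeg_int : Integrable (fun x => ∫ y, f x y ∂ν) ν :=
    (integrable_uncurry_of_le_one hf hf0 hf1).integral_prod_left
  calc ∫ x : Ω × Ω × Ω, f x.1 x.2.1 * f x.1 x.2.2 ∂(ν.prod (ν.prod ν))
      = ∫ x, (∫ y, f x y ∂ν) * (∫ z, f x z ∂ν) ∂ν := by
        rw [integral_prod _ hint]
        exact integral_congr_ae <| .of_forall fun x => integral_prod_mul (f x) (f x)
    _ ≤ ∫ x, (∫ y, f x y ∂ν) * δ ∂ν :=
        integral_mono (hint.integral_prod_left.congr <| .of_forall fun x =>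
            integral_prod_mul (f x) (f x)) (hdeg_int.mul_const δ) fun x =>
          mul_le_mul_of_nonneg_left (hdeg x) (integral_nonneg (hf0 x))
    _ = δ * ∫ q, f q.1 q.2 ∂(ν.prod ν) := by
        rw [integral_mul_const, mul_comm,
          integral_prod _ (integrable_uncurry_of_le_one hf hf0 hf1)]

end Kernel

section ProductSpace

variable {Ω ι : Type*} [MeasurableSpace Ω] {ν : Measure Ω} [IsProbabilityMeasure ν] [Fintype ι]

lemma iIndepFun_eval_pi : iIndepFun (fun i (ω : ι → Ω) => ω i) (Measure.pi fun _ => ν) :=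
  iIndepFun_pi (X := fun _ => id) fun _ => aemeasurable_id

lemma measurePreserving_eval_pair {i j : ι} (hij : i ≠ j) :
    MeasurePreserving (fun ω : ι → Ω => (ω i, ω j)) (Measure.pi fun _ => ν) (ν.prod ν) := by
  refine ⟨by fun_prop, ?_⟩
  rw [(indepFun_iff_map_prod_eq_prod_map_map (measurable_pi_apply i).aemeasurable
      (measurable_pi_apply j).aemeasurable).1 (iIndepFun_eval_pi.indepFun hij),
    (measurePreserving_eval _ i).map_eq, (measurePreserving_eval _ j).map_eq]

lemma measurePreserving_eval_triple {i j k : ι} (hij : i ≠ j) (hik : i ≠ k) (hjk : j ≠ k) :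
    MeasurePreserving (fun ω : ι → Ω => (ω i, ω j, ω k)) (Measure.pi fun _ => ν)
      (ν.prod (ν.prod ν)) := by
  refine ⟨by fun_prop, ?_⟩
  have hindep := (iIndepFun_eval_pi (ν := ν).indepFun_prodMk
    (fun l => measurable_pi_apply l) j k i hij.symm hik.symm).symm
  rw [(indepFun_iff_map_prod_eq_prod_map_map (measurable_pi_apply i).aemeasurable
      (by fun_prop)).1 hindep,
    (measurePreserving_eval _ i).map_eq, (measurePreserving_eval_pair hjk).map_eq]

end ProductSpace

lemma card_filter_mem_pair_le {ι : Type*} [Fintype ι] [DecidableEq ι] (e : ι × ι) :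
    #{e' : ι × ι | e.1 = e'.1 ∨ e.1 = e'.2 ∨ e.2 = e'.1 ∨ e.2 = e'.2} ≤ 4 * Fintype.card ι := by
  have hfst (a : ι) : #{e' : ι × ι | a = e'.1} = Fintype.card ι := by
    rw [show ({e' : ι × ι | a = e'.1} : Finset _) = {a} ×ˢ univ by ext ⟨x, y⟩; simp [eq_comm]]
    simp
  have hsnd (a : ι) : #{e' : ι × ι | a = e'.2} = Fintype.card ι := by
    rw [show ({e' : ι × ι | a = e'.2} : Finset _) = univ ×ˢ {a} by ext ⟨x, y⟩; simp [eq_comm]]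
    simp
  simp only [filter_or]
  grw [card_union_le, card_union_le, card_union_le, hfst, hsnd, hfst, hsnd]
  omega

section PairEval

variable {Ω ι : Type*} {f : Ω → Ω → ℝ}

def pairEval (f : Ω → Ω → ℝ) (e : ι × ι) (ω : ι → Ω) : ℝ := f (ω e.1) (ω e.2)

lemma pairEval_swap (hsymm : ∀ a b, f a b = f b a) (i j : ι) :
    pairEval f (j, i) = pairEval f (i, j) :=
  funext fun _ => hsymm _ _

variable [MeasurableSpace Ω]

lemma measurable_pairEval (hf : Measurable (Function.uncurry f)) (e : ι × ι) :
    Measurable (pairEval f e) :=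
  Measurable.comp (f := fun ω : ι → Ω => (ω e.1, ω e.2)) hf (by fun_prop)

variable {ν : Measure Ω} [IsProbabilityMeasure ν] [Fintype ι]

lemma memLp_pairEval (hf : Measurable (Function.uncurry f)) (hf0 : ∀ a b, 0 ≤ f a b)
    (hf1 : ∀ a b, f a b ≤ 1) (e : ι × ι) :
    MemLp (pairEval f e) 2 (Measure.pi fun _ : ι => ν) :=
  .of_bound (measurable_pairEval hf e).aestronglyMeasurable 1 <| .of_forall fun ω => by
    simpa [pairEval, abs_of_nonneg (hf0 _ _)] using hf1 (ω e.1) (ω e.2)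

lemma integral_pairEval (hf : Measurable (Function.uncurry f)) {e : ι × ι} (he : e.1 ≠ e.2) :
    ∫ ω, pairEval f e ω ∂(Measure.pi fun _ : ι => ν) = ∫ q, f q.1 q.2 ∂(ν.prod ν) := by
  rw [← (measurePreserving_eval_pair he).map_eq,
    integral_map (f := fun q : Ω × Ω => f q.1 q.2) (by fun_prop) hf.aestronglyMeasurable]
  rfl

lemma covariance_pairEval_self_le (hf : Measurable (Function.uncurry f))
    (hf0 : ∀ a b, 0 ≤ f a b) (hf1 : ∀ a b, f a b ≤ 1) {e : ι × ι} (he : e.1 ≠ e.2) :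
    cov[pairEval f e, pairEval f e; Measure.pi fun _ : ι => ν] ≤ ∫ q, f q.1 q.2 ∂(ν.prod ν) := by
  have hY := memLp_pairEval (ν := ν) hf hf0 hf1 e
  rw [covariance_eq_sub hY hY, ← integral_pairEval hf he]
  have hsq : ∫ ω, (pairEval f e * pairEval f e) ω ∂(Measure.pi fun _ : ι => ν)
      ≤ ∫ ω, pairEval f e ω ∂(Measure.pi fun _ : ι => ν) :=
    integral_mono (hY.integrable_mul hY) (hY.integrable one_le_two) fun ω =>
      mul_le_of_le_one_left (hf0 _ _) (hf1 _ _)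
  nlinarith [mul_self_nonneg (∫ ω, pairEval f e ω ∂(Measure.pi fun _ : ι => ν))]

lemma covariance_pairEval_eq_zero (hf : Measurable (Function.uncurry f))
    (hf0 : ∀ a b, 0 ≤ f a b) (hf1 : ∀ a b, f a b ≤ 1) {i j k l : ι}
    (hik : i ≠ k) (hil : i ≠ l) (hjk : j ≠ k) (hjl : j ≠ l) :
    cov[pairEval f (i, j), pairEval f (k, l); Measure.pi fun _ : ι => ν] = 0 := by
  have hindep : IndepFun (pairEval f (i, j)) (pairEval f (k, l)) (Measure.pi fun _ : ι => ν) :=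
    (iIndepFun_eval_pi.indepFun_prodMk_prodMk (fun t => measurable_pi_apply t)
      i j k l hik hil hjk hjl).comp hf hf
  exact hindep.covariance_eq_zero (memLp_pairEval hf hf0 hf1 _) (memLp_pairEval hf hf0 hf1 _)

lemma covariance_pairEval_le_of_common_vertex (hf : Measurable (Function.uncurry f))
    (hf0 : ∀ a b, 0 ≤ f a b) (hf1 : ∀ a b, f a b ≤ 1) {δ : ℝ}
    (hdeg : ∀ x, ∫ y, f x y ∂ν ≤ δ) {a b c : ι} (hab : a ≠ b) (hac : a ≠ c) (hbc : b ≠ c) :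
    cov[pairEval f (a, b), pairEval f (a, c); Measure.pi fun _ : ι => ν]
      ≤ δ * ∫ q, f q.1 q.2 ∂(ν.prod ν) := by
  rw [covariance_eq_sub (memLp_pairEval hf hf0 hf1 _) (memLp_pairEval hf hf0 hf1 _)]
  have hmap : ∫ ω, (pairEval f (a, b) * pairEval f (a, c)) ω ∂(Measure.pi fun _ : ι => ν)
      = ∫ x : Ω × Ω × Ω, f x.1 x.2.1 * f x.1 x.2.2 ∂(ν.prod (ν.prod ν)) := by
    rw [← (measurePreserving_eval_triple hab hac hbc).map_eq,
      integral_map (by fun_prop) (by fun_prop)]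
    rfl
  have hmean_nonneg : ∀ e : ι × ι, 0 ≤ ∫ ω, pairEval f e ω ∂(Measure.pi fun _ : ι => ν) :=
    fun e => integral_nonneg fun ω => hf0 _ _
  rw [hmap]
  nlinarith [integral_mul_of_common_vertex_le hf hf0 hf1 hdeg,
    mul_nonneg (hmean_nonneg (a, b)) (hmean_nonneg (a, c))]

lemma covariance_pairEval_le [LinearOrder ι] (hf : Measurable (Function.uncurry f))
    (hf0 : ∀ a b, 0 ≤ f a b) (hf1 : ∀ a b, f a b ≤ 1) (hsymm : ∀ a b, f a b = f b a)
    {δ : ℝ} (hδ : 0 ≤ δ) (hdeg : ∀ x, ∫ y, f x y ∂ν ≤ δ) {e e' : ι × ι}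
    (he : e.1 < e.2) (he' : e'.1 < e'.2) :
    cov[pairEval f e, pairEval f e'; Measure.pi fun _ : ι => ν]
      ≤ (if e = e' then ∫ q, f q.1 q.2 ∂(ν.prod ν) else 0)
        + (if e.1 = e'.1 ∨ e.1 = e'.2 ∨ e.2 = e'.1 ∨ e.2 = e'.2
            then δ * ∫ q, f q.1 q.2 ∂(ν.prod ν) else 0) := by
  obtain ⟨i, j⟩ := e
  obtain ⟨k, l⟩ := e'
  dsimp only at he he' ⊢
  have hp : 0 ≤ ∫ q, f q.1 q.2 ∂(ν.prod ν) := integral_nonneg fun q => hf0 q.1 q.2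
  by_cases hsame : (i, j) = (k, l)
  · obtain ⟨rfl, rfl⟩ := Prod.mk.inj hsame
    rw [if_pos rfl, if_pos (Or.inl rfl)]
    linarith [covariance_pairEval_self_le (ν := ν) (e := (i, j)) hf hf0 hf1 he.ne,
      mul_nonneg hδ hp]
  rw [if_neg hsame, zero_add]
  split_ifs with hshare
  · rcases hshare with rfl | rfl | rfl | rfl
    · exact covariance_pairEval_le_of_common_vertex hf hf0 hf1 hdeg he.ne he'.ne
        (fun h => hsame (by rw [h]))
    · rw [pairEval_swap hsymm i k]
      exact covariance_pairEval_le_of_common_vertex hf hf0 hf1 hdeg he.ne he'.ne'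
        (he'.trans he).ne'
    · rw [pairEval_swap hsymm j i]
      exact covariance_pairEval_le_of_common_vertex hf hf0 hf1 hdeg he.ne' he'.ne
        (he.trans he').ne
    · rw [pairEval_swap hsymm j i, pairEval_swap hsymm j k]
      exact covariance_pairEval_le_of_common_vertex hf hf0 hf1 hdeg he.ne' he'.ne'
        (fun h => hsame (by rw [h]))
  · obtain ⟨hik, hil, hjk, hjl⟩ : i ≠ k ∧ i ≠ l ∧ j ≠ k ∧ j ≠ l := by tauto
    exact (covariance_pairEval_eq_zero hf hf0 hf1 hik hil hjk hjl).le

lemma integral_sum_pairEval [LinearOrder ι] (hf : Measurable (Function.uncurry f))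
    (hf0 : ∀ a b, 0 ≤ f a b) (hf1 : ∀ a b, f a b ≤ 1) :
    ∫ ω, ∑ e ∈ {e : ι × ι | e.1 < e.2}, pairEval f e ω ∂(Measure.pi fun _ : ι => ν)
      = (Fintype.card ι).choose 2 * ∫ q, f q.1 q.2 ∂(ν.prod ν) := by
  rw [integral_finsetSum _ fun e _ => (memLp_pairEval hf hf0 hf1 e).integrable one_le_two,
    sum_congr rfl fun e he => integral_pairEval hf (mem_filter.1 he).2.ne, sum_const,
    Fintype.card_product_filter_lt, nsmul_eq_mul]

lemma variance_sum_pairEval_le [LinearOrder ι] (hf : Measurable (Function.uncurry f))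
    (hf0 : ∀ a b, 0 ≤ f a b) (hf1 : ∀ a b, f a b ≤ 1) (hsymm : ∀ a b, f a b = f b a)
    {δ : ℝ} (hδ : 0 ≤ δ) (hdeg : ∀ x, ∫ y, f x y ∂ν ≤ δ) :
    Var[fun ω => ∑ e ∈ {e : ι × ι | e.1 < e.2}, pairEval f e ω; Measure.pi fun _ : ι => ν]
      ≤ Fintype.card ι ^ 2 * (∫ q, f q.1 q.2 ∂(ν.prod ν)
        + 4 * Fintype.card ι * (δ * ∫ q, f q.1 q.2 ∂(ν.prod ν))) := by
  classical
  set p := ∫ q, f q.1 q.2 ∂(ν.prod ν)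
  set P : Finset (ι × ι) := {e | e.1 < e.2}
  have hp : 0 ≤ p := integral_nonneg fun q => hf0 q.1 q.2
  have hrow : ∀ e ∈ P, ∑ e' ∈ P, ((if e = e' then p else 0)
      + (if e.1 = e'.1 ∨ e.1 = e'.2 ∨ e.2 = e'.1 ∨ e.2 = e'.2 then δ * p else 0))
      ≤ p + 4 * Fintype.card ι * (δ * p) := by
    intro e he
    rw [sum_add_distrib, sum_ite_eq, if_pos he, ← sum_filter, sum_const, nsmul_eq_mul]
    gcongr
    calc (#{e' ∈ P | e.1 = e'.1 ∨ e.1 = e'.2 ∨ e.2 = e'.1 ∨ e.2 = e'.2} : ℝ)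
        ≤ #{e' : ι × ι | e.1 = e'.1 ∨ e.1 = e'.2 ∨ e.2 = e'.1 ∨ e.2 = e'.2} := by
          exact_mod_cast card_le_card (filter_subset_filter _ (subset_univ P))
      _ ≤ 4 * Fintype.card ι := by exact_mod_cast card_filter_mem_pair_le e
  have hcard : (#P : ℝ) ≤ Fintype.card ι ^ 2 := by
    exact_mod_cast (card_filter_le _ _).trans (by simp [sq])
  rw [variance_fun_sum' fun e _ => memLp_pairEval hf hf0 hf1 e]
  calc ∑ e ∈ P, ∑ e' ∈ P, cov[pairEval f e, pairEval f e'; Measure.pi fun _ : ι => ν]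
      ≤ ∑ e ∈ P, (p + 4 * Fintype.card ι * (δ * p)) :=
        sum_le_sum fun e he => (sum_le_sum fun e' he' => covariance_pairEval_le hf hf0 hf1
          hsymm hδ hdeg (mem_filter.1 he).2 (mem_filter.1 he').2).trans (hrow e he)
    _ ≤ Fintype.card ι ^ 2 * (p + 4 * Fintype.card ι * (δ * p)) := by
        rw [sum_const, nsmul_eq_mul]
        gcongr

end PairEval

theorem stmt11_general {Ω : Type*} [MeasurableSpace Ω] (ν : Measure Ω) [IsProbabilityMeasure ν]
    (f : Ω → Ω → ℝ) (hmeas : Measurable (Function.uncurry f))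
    (h01 : ∀ a b, f a b = 0 ∨ f a b = 1) (hsymm : ∀ a b, f a b = f b a)
    (δ : ℝ)
    (hbound : ∀ w, (ν {x | f w x = 1}).toReal ≤ δ)
    (m : ℕ) (hm : 1 ≤ (m : ℝ) * δ)
    (p : ℝ) (hp : p = ∫ q, f q.1 q.2 ∂(ν.prod ν))
    (X : (Fin m → Ω) → ℝ)
    (hX : X = fun ω => ∑ ij ∈ Finset.univ.filter (fun ij : Fin m × Fin m => ij.1 < ij.2),
      f (ω ij.1) (ω ij.2)) :
    (∫ ω, X ω ∂(Measure.pi fun _ : Fin m => ν)) = (m.choose 2 : ℝ) * p ∧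
      ProbabilityTheory.variance X (Measure.pi fun _ : Fin m => ν) ≤ 7 * δ * p * m ^ 3 := by
  have hf0 (a b : Ω) : 0 ≤ f a b := by rcases h01 a b with h | h <;> simp [h]
  have hf1 (a b : Ω) : f a b ≤ 1 := by rcases h01 a b with h | h <;> simp [h]
  have hdeg (w : Ω) : ∫ y, f w y ∂ν ≤ δ :=
    (integral_eq_measureReal_of_zero_or_one hmeas.of_uncurry_left (h01 w)).trans_le (hbound w)
  have hδ : 0 ≤ δ := by
    by_contra! hneg
    nlinarith [(Nat.cast_nonneg m : (0 : ℝ) ≤ m)]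
  have hp0 : 0 ≤ p := hp ▸ integral_nonneg fun q => hf0 q.1 q.2
  subst hX hp
  have hmean := integral_sum_pairEval (ν := ν) (ι := Fin m) hmeas hf0 hf1
  have hvar := variance_sum_pairEval_le (ν := ν) (ι := Fin m) hmeas hf0 hf1 hsymm hδ hdeg
  rw [Fintype.card_fin] at hmean hvar
  refine ⟨hmean, hvar.trans ?_⟩
  nlinarith [mul_le_mul_of_nonneg_right hm (mul_nonneg (sq_nonneg (m : ℝ)) hp0)]

/-- For symmetric `{0,1}`-valued `f` with `Pr_{W'}(f w W' = 1) ≤ δ` for all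
`w`, independent `ν`-random `W_1, …, W_m` with `m·δ ≥ 1`, `p = E[f(W_1,W_2)]` and
`X = ∑_{i<j} f(W_i, W_j)`, we have `E[X] = (m choose 2)·p` and `Var(X) ≤ 7·δ·p·m³`. -/
theorem stmt11 {Ω : Type*} [MeasurableSpace Ω] (ν : Measure Ω) [IsProbabilityMeasure ν]
    (f : Ω → Ω → ℝ) (hmeas : Measurable (Function.uncurry f))
    (h01 : ∀ a b, f a b = 0 ∨ f a b = 1) (hsymm : ∀ a b, f a b = f b a)
    (δ : ℝ) (hδ : 0 < δ)
    (hbound : ∀ w, (ν {x | f w x = 1}).toReal ≤ δ)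
    (m : ℕ) (hm : 1 ≤ (m : ℝ) * δ)
    (p : ℝ) (hp : p = ∫ q, f q.1 q.2 ∂(ν.prod ν))
    (X : (Fin m → Ω) → ℝ)
    (hX : X = fun ω => ∑ ij ∈ Finset.univ.filter (fun ij : Fin m × Fin m => ij.1 < ij.2),
      f (ω ij.1) (ω ij.2)) :
    (∫ ω, X ω ∂(Measure.pi fun _ : Fin m => ν)) = (m.choose 2 : ℝ) * p ∧
      ProbabilityTheory.variance X (Measure.pi fun _ : Fin m => ν) ≤ 7 * δ * p * m ^ 3 :=
  stmt11_general ν f hmeas h01 hsymm δ hbound m hm p hp X hX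
end
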